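/- Let x and x' have alternating Cantor representations with digits agreeing up to position m−1, and with digits ε_m = ε'_m + 1 at position m. If ε_{m+2i−1} = d_{m+2i−1} − 1, ε_{m+2i} = 0, ε'_{m+2i−1} = 0, ε'_{m+2i} = d_{m+2i} − 1 for all i ≥ 1, then x = x'. -/

import Mathlib

/-!
Past position `m` the digit differences `ε_n - ε'_n` alternate as `±(d_n - 1)`, and
`(d_n - 1) / P_n = 1 / P_{n-1} - 1 / P_n`. So with `a_n = 1 / P_n` for `n ≥ m` and `a_n = 0` for
`n < m`, every term of the difference of the two series is `(-1)^(m+1) (a_{n-1} - a_n)` (the jump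
`ε_m - ε'_m = 1` accounts for the term at `n = m`). The series telescopes to
`(-1)^(m+1) a_0 = 0`, since `m ≥ 1` and `a_n → 0` because `P_n ≥ 2^n`.
-/

open Finset

/-- Product d_1 d_2 ... d_n. -/
noncomputable def P (d : ℕ → ℕ) (n : ℕ) : ℝ := ∏ i ∈ Finset.Icc 1 n, (d i : ℝ)

/-- The alternating Cantor series sum ∑_{n≥1} (-1)^n ε_n/(d_1...d_n). -/
noncomputable def negaSum (d ε : ℕ → ℕ) : ℝ :=
  ∑' n : ℕ, (-1 : ℝ) ^ (n + 1) * (ε (n + 1) : ℝ) / P d (n + 1)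

/-- a₀ = ∑_{n≥1} (-1)^{n+1}/(d_1...d_n). -/
noncomputable def a0 (d : ℕ → ℕ) : ℝ := ∑' n : ℕ, (-1 : ℝ) ^ n / P d (n + 1)

open Filter Topology

theorem hasSum_sub_succ_of_tendsto {G : Type*} [AddCommGroup G] [TopologicalSpace G]
    [IsTopologicalAddGroup G] [T2Space G] {a : ℕ → G} {l : G}
    (hs : Summable fun n ↦ a n - a (n + 1)) (ha : Tendsto a atTop (𝓝 l)) :
    HasSum (fun n ↦ a n - a (n + 1)) (a 0 - l) :=
  hs.hasSum_iff_tendsto_nat.mpr <| by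
    simpa only [sum_range_sub'] using tendsto_const_nhds.sub ha

noncomputable def negaTerm (d ε : ℕ → ℕ) (n : ℕ) : ℝ :=
  (-1) ^ (n + 1) * (ε (n + 1) : ℝ) / P d (n + 1)

lemma negaSum_eq_tsum (d ε : ℕ → ℕ) : negaSum d ε = ∑' n, negaTerm d ε n := rfl

noncomputable def tailInv (d : ℕ → ℕ) (m n : ℕ) : ℝ := if m ≤ n then (P d n)⁻¹ else 0

lemma P_succ (d : ℕ → ℕ) (n : ℕ) : P d (n + 1) = P d n * d (n + 1) :=
  prod_Icc_succ_top (Nat.le_add_left 1 n) _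

section Bases

variable {d : ℕ → ℕ} (hd : ∀ n, 1 ≤ n → 2 ≤ d n)
include hd

lemma two_pow_le_P (n : ℕ) : (2 : ℝ) ^ n ≤ P d n := by
  induction n with
  | zero => simp [P]
  | succ k ih =>
    rw [P_succ, pow_succ]
    gcongr
    · exact (pow_nonneg zero_le_two k).trans ih
    · exact_mod_cast hd (k + 1) le_add_self

lemma P_pos (n : ℕ) : 0 < P d n :=
  (pow_pos two_pos n).trans_le (two_pow_le_P hd n)

lemma tendsto_inv_P_atTop : Tendsto (fun n ↦ (P d n)⁻¹) atTop (𝓝 0) :=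
  tendsto_inv_atTop_zero.comp <|
    tendsto_atTop_mono (two_pow_le_P hd) (tendsto_pow_atTop_atTop_of_one_lt one_lt_two)

lemma tendsto_tailInv_atTop (m : ℕ) : Tendsto (tailInv d m) atTop (𝓝 0) :=
  (tendsto_inv_P_atTop hd).congr' (eventually_atTop.2 ⟨m, fun _ hn ↦ (if_pos hn).symm⟩)

lemma inv_P_sub_inv_P_succ (n : ℕ) :
    (P d n)⁻¹ - (P d (n + 1))⁻¹ = ((d (n + 1) : ℝ) - 1) / P d (n + 1) := by
  have hdn : (d (n + 1) : ℝ) ≠ 0 := by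
    have := hd (n + 1) le_add_self
    positivity
  rw [P_succ]
  field_simp [(P_pos hd n).ne']

lemma summable_negaTerm {ε : ℕ → ℕ} (hε : ∀ᶠ n in atTop, ε n ≤ d n) :
    Summable (negaTerm d ε) := by
  refine .of_norm_bounded_eventually_nat summable_geometric_two ?_
  filter_upwards [(tendsto_add_atTop_nat 1).eventually hε] with n hn
  have hP := P_pos hd (n + 1)
  calc ‖negaTerm d ε n‖ = ε (n + 1) / P d (n + 1) := by
        simp [negaTerm, abs_of_pos hP]
    _ ≤ d (n + 1) / P d (n + 1) := by gcongr
    _ = (P d n)⁻¹ := by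
        have := hd (n + 1) le_add_self
        rw [P_succ, div_mul_cancel_right₀ (by positivity)]
    _ ≤ (1 / 2) ^ n := by
        rw [one_div, inv_pow]
        exact inv_anti₀ (by positivity) (two_pow_le_P hd n)

end Bases

lemma exists_eq_add_two_mul_add_one_or_two {m n : ℕ} (h : m < n) :
    ∃ j, n = m + 2 * j + 1 ∨ n = m + 2 * j + 2 := by
  obtain ⟨j, hj | hj⟩ := Nat.even_or_odd' (n - m - 1)
  all_goals exact ⟨j, by omega⟩

section Tail

variable {d ε ε' : ℕ → ℕ} {m : ℕ}
  (htail : ∀ i : ℕ, ε (m + 2 * i + 1) = d (m + 2 * i + 1) - 1 ∧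
    ε (m + 2 * i + 2) = 0 ∧ ε' (m + 2 * i + 1) = 0 ∧
    ε' (m + 2 * i + 2) = d (m + 2 * i + 2) - 1)
include htail

lemma eventually_digits_le_of_tail : ∀ᶠ n in atTop, ε n ≤ d n ∧ ε' n ≤ d n := by
  refine eventually_atTop.2 ⟨m + 1, fun n hn ↦ ?_⟩
  obtain ⟨j, rfl | rfl⟩ := exists_eq_add_two_mul_add_one_or_two hn <;>
    have := htail j <;> omega

lemma digit_sub_eq_of_tail (hd : ∀ n, 1 ≤ n → 2 ≤ d n) (i : ℕ) :
    (ε (m + i + 1) : ℝ) - ε' (m + i + 1) = (-1) ^ i * ((d (m + i + 1) : ℝ) - 1) := by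
  have hd1 : ∀ n, 1 ≤ d (m + n + 1) := fun n ↦ (hd _ le_add_self).trans' one_le_two
  obtain ⟨j, rfl | rfl⟩ := Nat.even_or_odd' i
  · obtain ⟨h1, -, h3, -⟩ := htail j
    rw [h1, h3, Nat.cast_sub (hd1 _), pow_mul]
    simp
  · obtain ⟨-, h2, -, h4⟩ := htail j
    have hidx : m + (2 * j + 1) + 1 = m + 2 * j + 2 := by omega
    rw [hidx, h2, h4, Nat.cast_sub (hidx ▸ hd1 _), pow_succ, pow_mul]
    simp

lemma negaTerm_sub_negaTerm_eq (hd : ∀ n, 1 ≤ n → 2 ≤ d n)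
    (hagree : ∀ n, n < m → ε n = ε' n) (hstep : ε m = ε' m + 1) (n : ℕ) :
    negaTerm d ε n - negaTerm d ε' n =
      (-1) ^ (m + 1) * (tailInv d m n - tailInv d m (n + 1)) := by
  have hsub : negaTerm d ε n - negaTerm d ε' n
      = (-1) ^ (n + 1) * ((ε (n + 1) : ℝ) - ε' (n + 1)) / P d (n + 1) := by
    unfold negaTerm
    ring
  rw [hsub]
  rcases lt_trichotomy (n + 1) m with hlt | rfl | hgt
  · simp [tailInv, hagree _ hlt, show ¬m ≤ n by omega, show ¬m ≤ n + 1 by omega]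
  · rw [tailInv, tailInv, if_neg (by omega), if_pos le_rfl, hstep]
    push_cast
    ring
  · obtain ⟨i, rfl⟩ : ∃ i, n = m + i := ⟨n - m, by omega⟩
    have hsq : ((-1 : ℝ) ^ i) * (-1) ^ i = 1 := by
      rw [← mul_pow]
      norm_num
    rw [digit_sub_eq_of_tail htail hd i, tailInv, tailInv, if_pos (by omega), if_pos (by omega),
      inv_P_sub_inv_P_succ hd]
    linear_combination ((-1) ^ (m + 1) * ((d (m + i + 1) : ℝ) - 1) / P d (m + i + 1)) * hsq

end Tail

theorem alternating_cantor_two_representations_eq_general (d ε ε' : ℕ → ℕ) (m : ℕ)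
    (hm : 1 ≤ m) (hd : ∀ n, 1 ≤ n → 2 ≤ d n)
    (hagree : ∀ n, n < m → ε n = ε' n)
    (hstep : ε m = ε' m + 1)
    (htail : ∀ i : ℕ, ε (m + 2 * i + 1) = d (m + 2 * i + 1) - 1 ∧
      ε (m + 2 * i + 2) = 0 ∧ ε' (m + 2 * i + 1) = 0 ∧
      ε' (m + 2 * i + 2) = d (m + 2 * i + 2) - 1) :
    negaSum d ε = negaSum d ε' := by
  have hle := eventually_digits_le_of_tail htail
  have hs := summable_negaTerm hd (hle.mono fun _ h ↦ h.1)
  have hs' := summable_negaTerm hd (hle.mono fun _ h ↦ h.2)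
  have hterm := negaTerm_sub_negaTerm_eq htail hd hagree hstep
  have htel : HasSum (fun n ↦ tailInv d m n - tailInv d m (n + 1)) 0 := by
    have hsum : Summable fun n ↦ tailInv d m n - tailInv d m (n + 1) :=
      (summable_mul_left_iff (a := (-1 : ℝ) ^ (m + 1)) (by simp)).mp <| by
        simpa only [hterm] using hs.sub hs'
    simpa [tailInv, Nat.not_le.mpr hm] using
      hasSum_sub_succ_of_tendsto hsum (tendsto_tailInv_atTop hd m)
  rw [← sub_eq_zero, negaSum_eq_tsum, negaSum_eq_tsum, ← hs.tsum_sub hs']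
  simpa only [hterm, mul_zero] using (htel.mul_left ((-1 : ℝ) ^ (m + 1))).tsum_eq

theorem alternating_cantor_two_representations_eq (d ε ε' : ℕ → ℕ) (m : ℕ)
    (hm : 1 ≤ m) (hd : ∀ n, 1 ≤ n → 2 ≤ d n)
    (hε : ∀ n, 1 ≤ n → ε n ≤ d n - 1) (hε' : ∀ n, 1 ≤ n → ε' n ≤ d n - 1)
    (hagree : ∀ n, n < m → ε n = ε' n)
    (hstep : ε m = ε' m + 1)
    (htail : ∀ i : ℕ, ε (m + 2 * i + 1) = d (m + 2 * i + 1) - 1 ∧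
      ε (m + 2 * i + 2) = 0 ∧ ε' (m + 2 * i + 1) = 0 ∧
      ε' (m + 2 * i + 2) = d (m + 2 * i + 2) - 1) :
    negaSum d ε = negaSum d ε' :=
  alternating_cantor_two_representations_eq_general d ε ε' m hm hd hagree hstep htail
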